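/- The Lie algebras g_{D_l} and g_{B_l} are simple: each is non-abelian and has no Lie ideals other than the zero ideal and itself. -/

import Mathlib

noncomputable section

open CliffordAlgebra

/-- The `2l`-dimensional complex vector space `A` with basis `a_1, …, a_l, a_1^*, …, a_l^*`,
realized as pairs of coordinate vectors. -/
abbrev Avec (l : ℕ) : Type := (Fin l → ℂ) × (Fin l → ℂ)

/-- The bilinear form `F(u, v) = ∑ u.1 i * v.2 i` on `Avec l`. -/
def Bform (l : ℕ) : LinearMap.BilinForm ℂ (Avec l) :=
  LinearMap.mk₂ ℂ (fun u v => ∑ i, u.1 i * v.2 i)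
    (fun u u' v => by simp [add_mul, Finset.sum_add_distrib])
    (fun c u v => by simp [Finset.mul_sum, mul_assoc])
    (fun u v v' => by simp [mul_add, Finset.sum_add_distrib])
    (fun c u v => by simp [Finset.mul_sum, mul_left_comm])

/-- The quadratic form `Q(∑ x_i a_i + ∑ y_i a_i^*) = ∑ x_i y_i` on `Avec l`. -/
def Qform (l : ℕ) : QuadraticForm ℂ (Avec l) := (Bform l).toQuadraticMap

/-- The basis vector `a_i`. -/
def av (l : ℕ) (i : Fin l) : Avec l := (Pi.single i 1, 0)

/-- The basis vector `a_i^*`. -/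
def avs (l : ℕ) (i : Fin l) : Avec l := (0, Pi.single i 1)

/-- The normally ordered product `:xy: = (1/2)(ι(x)ι(y) − ι(y)ι(x))` in the Clifford algebra. -/
def nor (l : ℕ) (x y : Avec l) : CliffordAlgebra (Qform l) :=
  (2⁻¹ : ℂ) • (ι (Qform l) x * ι (Qform l) y - ι (Qform l) y * ι (Qform l) x)

/-- `g_{D_l} = span_ℂ{ :xy: : x, y ∈ A }`. -/
def gD (l : ℕ) : Submodule ℂ (CliffordAlgebra (Qform l)) :=
  Submodule.span ℂ {z | ∃ x y : Avec l, z = nor l x y}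

/-- `g_{B_l} = g_{D_l} + ι(A)`. -/
def gB (l : ℕ) : Submodule ℂ (CliffordAlgebra (Qform l)) :=
  gD l ⊔ LinearMap.range (ι (Qform l))

/-- `H_i = :a_i a_i^*:`. -/
def Hc (l : ℕ) (i : Fin l) : CliffordAlgebra (Qform l) := nor l (av l i) (avs l i)

/-- `e_{ε_i−ε_j} = :a_i a_j^*:`. -/
def eM (l : ℕ) (i j : Fin l) : CliffordAlgebra (Qform l) := nor l (av l i) (avs l j)

/-- `e_{ε_i+ε_j} = :a_i a_j:`. -/
def eP (l : ℕ) (i j : Fin l) : CliffordAlgebra (Qform l) := nor l (av l i) (av l j)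

/-- `f_{ε_i−ε_j} = :a_j a_i^*:`. -/
def fM (l : ℕ) (i j : Fin l) : CliffordAlgebra (Qform l) := nor l (av l j) (avs l i)

/-- `f_{ε_i+ε_j} = :a_j^* a_i^*:`. -/
def fP (l : ℕ) (i j : Fin l) : CliffordAlgebra (Qform l) := nor l (avs l j) (avs l i)


namespace GDB

attribute [local instance] LieRing.ofAssociativeRing

variable {l : ℕ}

/-- The polar form of `Qform l` as a plain function. -/
def pol (l : ℕ) (u v : Avec l) : ℂ := QuadraticMap.polar (Qform l) u v

lemma pol_eq (u v : Avec l) : pol l u v = Bform l u v + Bform l v u := by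
  simp [pol, Qform, LinearMap.BilinMap.polar_toQuadraticMap]

lemma Bform_apply (u v : Avec l) : Bform l u v = ∑ i, u.1 i * v.2 i := rfl

def del (i j : Fin l) : ℂ := if i = j then 1 else 0

lemma Bform_av_avs (i j : Fin l) : Bform l (av l i) (avs l j) = del i j := by
  rw [Bform_apply]
  simp [av, avs, Pi.single_apply, del, Finset.sum_ite_eq, ite_and, eq_comm]

lemma Bform_av_av (i j : Fin l) : Bform l (av l i) (av l j) = 0 := by
  rw [Bform_apply]; simp [av]

lemma Bform_avs_x (i : Fin l) (x : Avec l) : Bform l (avs l i) x = 0 := by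
  rw [Bform_apply]; simp [avs]

lemma pol_av_avs (i j : Fin l) : pol l (av l i) (avs l j) = del i j := by
  rw [pol_eq, Bform_av_avs, Bform_avs_x, add_zero]

lemma pol_avs_av (i j : Fin l) : pol l (avs l i) (av l j) = del j i := by
  rw [pol_eq, Bform_av_avs, Bform_avs_x, zero_add]

lemma pol_av_av (i j : Fin l) : pol l (av l i) (av l j) = 0 := by
  rw [pol_eq, Bform_av_av, Bform_av_av, add_zero]

lemma pol_avs_avs (i j : Fin l) : pol l (avs l i) (avs l j) = 0 := by
  rw [pol_eq, Bform_avs_x, Bform_avs_x, add_zero]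

lemma iota_swap (u v : Avec l) :
    ι (Qform l) v * ι (Qform l) u
      = algebraMap ℂ _ (pol l u v) - ι (Qform l) u * ι (Qform l) v := by
  rw [ι_mul_ι_comm]
  congr 1
  rw [pol]
  exact congrArg _ (QuadraticMap.polar_comm _ _ _)

lemma nor_eq (u v : Avec l) :
    nor l u v = ι (Qform l) u * ι (Qform l) v - algebraMap ℂ _ (pol l u v / 2) := by
  rw [nor, iota_swap u v, Algebra.algebraMap_eq_smul_one, Algebra.algebraMap_eq_smul_one]
  match_scalars <;> ring


lemma iota_swap' (u v : Avec l) :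
    ι (Qform l) v * ι (Qform l) u
      = pol l u v • (1 : CliffordAlgebra (Qform l)) - ι (Qform l) u * ι (Qform l) v := by
  rw [iota_swap, Algebra.algebraMap_eq_smul_one]

lemma swap_mul (a b : Avec l) (x : CliffordAlgebra (Qform l)) :
    ι (Qform l) b * (ι (Qform l) a * x)
      = pol l a b • x - ι (Qform l) a * (ι (Qform l) b * x) := by
  rw [← mul_assoc, iota_swap' a b, sub_mul, smul_mul_assoc, one_mul, mul_assoc]

lemma mul3 (a b c : Avec l) :
    ι (Qform l) c * (ι (Qform l) a * ι (Qform l) b)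
      = pol l a c • ι (Qform l) b - pol l b c • ι (Qform l) a
        + ι (Qform l) a * (ι (Qform l) b * ι (Qform l) c) := by
  rw [swap_mul a c (ι (Qform l) b), iota_swap' b c]
  simp only [mul_sub, mul_smul_comm, mul_one]
  abel

lemma mul4 (a b c d : Avec l) :
    ι (Qform l) c * (ι (Qform l) d * (ι (Qform l) a * ι (Qform l) b))
      = (pol l a d * pol l b c) • (1 : CliffordAlgebra (Qform l))
        - pol l a d • (ι (Qform l) b * ι (Qform l) c)
        - (pol l a c * pol l b d) • (1 : CliffordAlgebra (Qform l))
        + pol l a c • (ι (Qform l) b * ι (Qform l) d)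
        + pol l b d • (ι (Qform l) a * ι (Qform l) c)
        - pol l b c • (ι (Qform l) a * ι (Qform l) d)
        + ι (Qform l) a * (ι (Qform l) b * (ι (Qform l) c * ι (Qform l) d)) := by
  rw [swap_mul a d (ι (Qform l) b), iota_swap' b d]
  simp only [mul_sub, mul_smul_comm, mul_one, smul_sub, smul_smul]
  rw [swap_mul a c (ι (Qform l) b * ι (Qform l) d), swap_mul b c (ι (Qform l) d),
    iota_swap' b c, iota_swap' a c]
  simp only [mul_sub, mul_smul_comm, mul_one, smul_sub, smul_smul]
  match_scalars <;> ring

lemma lie_nor_nor (a b c d : Avec l) :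
    ⁅nor l a b, nor l c d⁆
      = pol l b c • nor l a d + pol l a d • nor l b c
        - pol l a c • nor l b d - pol l b d • nor l a c := by
  rw [Ring.lie_def]
  simp only [nor_eq, Algebra.algebraMap_eq_smul_one]
  simp only [mul_sub, sub_mul, smul_mul_assoc, mul_smul_comm, mul_one, one_mul, smul_smul,
    smul_sub]
  rw [show (ι (Qform l) c * ι (Qform l) d) * (ι (Qform l) a * ι (Qform l) b)
      = ι (Qform l) c * (ι (Qform l) d * (ι (Qform l) a * ι (Qform l) b)) by
    rw [mul_assoc]]
  rw [mul4]
  rw [show (ι (Qform l) a * ι (Qform l) b) * (ι (Qform l) c * ι (Qform l) d)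
      = ι (Qform l) a * (ι (Qform l) b * (ι (Qform l) c * ι (Qform l) d)) by
    rw [mul_assoc]]
  match_scalars <;> ring

lemma lie_nor_iota (a b c : Avec l) :
    ⁅nor l a b, ι (Qform l) c⁆ = pol l b c • ι (Qform l) a - pol l a c • ι (Qform l) b := by
  rw [Ring.lie_def]
  simp only [nor_eq, Algebra.algebraMap_eq_smul_one]
  simp only [mul_sub, sub_mul, smul_mul_assoc, mul_smul_comm, mul_one, one_mul]
  rw [mul3]
  rw [show (ι (Qform l) a * ι (Qform l) b) * ι (Qform l) c
      = ι (Qform l) a * (ι (Qform l) b * ι (Qform l) c) by rw [mul_assoc]]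
  match_scalars <;> ring

lemma lie_iota_iota (a b : Avec l) :
    ⁅ι (Qform l) a, ι (Qform l) b⁆ = (2 : ℂ) • nor l a b := by
  rw [Ring.lie_def, nor, smul_smul]
  norm_num

lemma nor_comm (a b : Avec l) : nor l a b = - nor l b a := by
  rw [nor, nor, ← smul_neg]
  congr 1
  abel

lemma nor_self (a : Avec l) : nor l a a = 0 := by
  simp [nor]

lemma del_comm (i j : Fin l) : del i j = del j i := by
  simp [del, eq_comm]

@[simp] lemma del_self (i : Fin l) : del i i = 1 := by simp [del]

lemma del_ne {i j : Fin l} (h : i ≠ j) : del i j = 0 := by simp [del, h]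

lemma lie_eM_eM (i j k m : Fin l) :
    ⁅eM l i j, eM l k m⁆ = del j k • eM l i m - del i m • eM l k j := by
  rw [eM, eM, lie_nor_nor]
  rw [pol_avs_av, pol_av_avs, pol_av_av, pol_avs_avs, zero_smul, zero_smul,
    nor_comm (avs l j) (av l k)]
  rw [del_comm k j]
  simp only [smul_neg, eM]
  abel

lemma lie_eM_eP (i j k m : Fin l) :
    ⁅eM l i j, eP l k m⁆ = del j k • eP l i m - del j m • eP l i k := by
  rw [eM, eP, lie_nor_nor]
  rw [pol_avs_av, pol_av_av, pol_av_av, pol_avs_av, zero_smul, zero_smul,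
    del_comm k j, del_comm m j]
  simp only [eP]
  abel

lemma lie_eM_fP (i j k m : Fin l) :
    ⁅eM l i j, fP l k m⁆ = del i k • fP l m j - del i m • fP l k j := by
  rw [eM, fP, lie_nor_nor]
  rw [pol_avs_avs, pol_av_avs, pol_av_avs, pol_avs_avs, zero_smul, zero_smul]
  simp only [fP]
  abel

lemma lie_eP_fP (i j k m : Fin l) :
    ⁅eP l i j, fP l k m⁆
      = del j m • eM l i k + del i k • eM l j m - del i m • eM l j k - del j k • eM l i m := by
  rw [eP, fP, lie_nor_nor]
  rw [pol_av_avs, pol_av_avs, pol_av_avs, pol_av_avs]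
  simp only [eM]

lemma lie_eM_A (i j k : Fin l) :
    ⁅eM l i j, ι (Qform l) (av l k)⁆ = del j k • ι (Qform l) (av l i) := by
  rw [eM, lie_nor_iota, pol_avs_av, pol_av_av, zero_smul, sub_zero, del_comm k j]

lemma lie_eM_B (i j k : Fin l) :
    ⁅eM l i j, ι (Qform l) (avs l k)⁆ = - (del i k • ι (Qform l) (avs l j)) := by
  rw [eM, lie_nor_iota, pol_avs_avs, pol_av_avs, zero_smul, zero_sub]

lemma lie_A_B (j : Fin l) :
    ⁅ι (Qform l) (av l j), ι (Qform l) (avs l j)⁆ = (2 : ℂ) • eM l j j := by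
  rw [lie_iota_iota]; rfl

lemma lie_B_A (j : Fin l) :
    ⁅ι (Qform l) (avs l j), ι (Qform l) (av l j)⁆ = (-2 : ℂ) • eM l j j := by
  rw [lie_iota_iota, nor_comm, eM, smul_neg, ← neg_smul]

-- weight lemmas
lemma eP_flip (i j : Fin l) : eP l j i = - eP l i j := by
  rw [eP, eP]; exact nor_comm _ _

lemma fP_flip (i j : Fin l) : fP l j i = - fP l i j := by
  rw [fP, fP]; exact nor_comm _ _

lemma wt_eM (m i j : Fin l) :
    ⁅eM l m m, eM l i j⁆ = (del m i - del m j) • eM l i j := by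
  rw [lie_eM_eM]
  by_cases h1 : m = i
  · subst h1
    by_cases h2 : m = j
    · subst h2; simp
    · rw [del_ne h2]; simp
  · rw [del_ne h1]
    by_cases h2 : m = j
    · subst h2; simp
    · rw [del_ne h2]; simp

lemma wt_eP (m i j : Fin l) :
    ⁅eM l m m, eP l i j⁆ = (del m i + del m j) • eP l i j := by
  rw [lie_eM_eP]
  by_cases h1 : m = i
  · subst h1
    by_cases h2 : m = j
    · subst h2; simp [eP, nor_self]
    · rw [del_ne h2]; simp
  · rw [del_ne h1]
    by_cases h2 : m = j
    · subst h2; rw [eP_flip m i]; simp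
    · rw [del_ne h2]; simp

lemma wt_fP (m i j : Fin l) :
    ⁅eM l m m, fP l i j⁆ = (-(del m i + del m j)) • fP l i j := by
  rw [lie_eM_fP]
  by_cases h1 : m = i
  · subst h1
    by_cases h2 : m = j
    · subst h2; simp [fP, nor_self]
    · rw [del_ne h2, fP_flip j m]; simp
  · rw [del_ne h1]
    by_cases h2 : m = j
    · subst h2; simp
    · rw [del_ne h2]; simp

lemma wt_A (m k : Fin l) :
    ⁅eM l m m, ι (Qform l) (av l k)⁆ = del m k • ι (Qform l) (av l k) := by
  rw [lie_eM_A]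
  by_cases h : m = k
  · subst h; rfl
  · simp [del_ne, h]

lemma wt_B (m k : Fin l) :
    ⁅eM l m m, ι (Qform l) (avs l k)⁆ = (-del m k) • ι (Qform l) (avs l k) := by
  rw [lie_eM_B]
  by_cases h : m = k
  · subst h; simp
  · simp [del_ne, h]

-- hstar
def hstar (l : ℕ) : CliffordAlgebra (Qform l) :=
  ∑ m : Fin l, ((3 : ℂ) ^ (m : ℕ)) • eM l m m

lemma lie_hstar_of_wt (x : CliffordAlgebra (Qform l)) (φ : Fin l → ℂ)
    (h : ∀ m, ⁅eM l m m, x⁆ = φ m • x) :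
    ⁅hstar l, x⁆ = (∑ m : Fin l, (3 : ℂ) ^ (m : ℕ) * φ m) • x := by
  have step : ⁅hstar l, x⁆ = ∑ m : Fin l, ⁅((3 : ℂ) ^ (m : ℕ)) • eM l m m, x⁆ := by
    simp only [hstar, Ring.lie_def, Finset.sum_mul, Finset.mul_sum, ← Finset.sum_sub_distrib]
  rw [step, Finset.sum_smul]
  refine Finset.sum_congr rfl fun m _ => ?_
  rw [smul_lie, h, smul_smul]

lemma sum_del (i : Fin l) : (∑ m : Fin l, (3 : ℂ) ^ (m : ℕ) * del m i) = 3 ^ (i : ℕ) := by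
  simp [del, mul_ite, Finset.sum_ite_eq']

lemma hstar_eM (i j : Fin l) :
    ⁅hstar l, eM l i j⁆ = ((3 : ℂ) ^ (i : ℕ) - 3 ^ (j : ℕ)) • eM l i j := by
  rw [lie_hstar_of_wt _ _ (fun m => wt_eM m i j)]
  congr 1
  simp only [mul_sub, Finset.sum_sub_distrib, sum_del]

lemma hstar_eP (i j : Fin l) :
    ⁅hstar l, eP l i j⁆ = ((3 : ℂ) ^ (i : ℕ) + 3 ^ (j : ℕ)) • eP l i j := by
  rw [lie_hstar_of_wt _ _ (fun m => wt_eP m i j)]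
  congr 1
  simp only [mul_add, Finset.sum_add_distrib, sum_del]

lemma hstar_fP (i j : Fin l) :
    ⁅hstar l, fP l i j⁆ = (-((3 : ℂ) ^ (i : ℕ) + 3 ^ (j : ℕ))) • fP l i j := by
  rw [lie_hstar_of_wt _ _ (fun m => wt_fP m i j)]
  congr 1
  simp only [mul_neg, mul_add, Finset.sum_neg_distrib, Finset.sum_add_distrib, sum_del]

lemma hstar_A (k : Fin l) :
    ⁅hstar l, ι (Qform l) (av l k)⁆ = ((3 : ℂ) ^ (k : ℕ)) • ι (Qform l) (av l k) := by
  rw [lie_hstar_of_wt _ _ (fun m => wt_A m k)]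
  congr 1
  exact sum_del k

lemma hstar_B (k : Fin l) :
    ⁅hstar l, ι (Qform l) (avs l k)⁆ = (-(3 : ℂ) ^ (k : ℕ)) • ι (Qform l) (avs l k) := by
  rw [lie_hstar_of_wt _ _ (fun m => wt_B m k)]
  congr 1
  rw [show (∑ m : Fin l, (3:ℂ) ^ (m:ℕ) * -del m k) = -∑ m : Fin l, (3:ℂ) ^ (m:ℕ) * del m k by
    rw [← Finset.sum_neg_distrib]; exact Finset.sum_congr rfl fun m _ => by ring, sum_del]

-- membership
lemma nor_mem_gD (x y : Avec l) : nor l x y ∈ gD l :=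
  Submodule.subset_span ⟨x, y, rfl⟩

lemma eM_mem_gD (i j : Fin l) : eM l i j ∈ gD l := nor_mem_gD _ _
lemma eP_mem_gD (i j : Fin l) : eP l i j ∈ gD l := nor_mem_gD _ _
lemma fP_mem_gD (i j : Fin l) : fP l i j ∈ gD l := nor_mem_gD _ _

lemma hstar_mem_gD : hstar l ∈ gD l :=
  Submodule.sum_mem _ fun m _ => Submodule.smul_mem _ _ (eM_mem_gD m m)

lemma gD_le_gB : gD l ≤ gB l := le_sup_left

lemma iota_mem_gB (x : Avec l) : ι (Qform l) x ∈ gB l :=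
  (le_sup_right : LinearMap.range (ι (Qform l)) ≤ gB l) ⟨x, rfl⟩

-- index types and spanning families
abbrev K (l : ℕ) : Type := Fin l × Fin l × Fin 3

instance : Fintype (K l) := by unfold K; infer_instance
instance : DecidableEq (K l) := by unfold K; infer_instance

def Gg (l : ℕ) : K l → CliffordAlgebra (Qform l) := fun k =>
  if k.2.2 = 0 then eM l k.1 k.2.1
  else if k.2.2 = 1 then (if k.1 < k.2.1 then eP l k.1 k.2.1 else 0)
  else (if k.1 < k.2.1 then fP l k.1 k.2.1 else 0)

abbrev KB (l : ℕ) : Type := K l ⊕ (Fin l × Fin 2)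

instance : Fintype (KB l) := by unfold KB; infer_instance
instance : DecidableEq (KB l) := by unfold KB; infer_instance

def GgB (l : ℕ) : KB l → CliffordAlgebra (Qform l) :=
  Sum.elim (Gg l) fun p =>
    if p.2 = 0 then ι (Qform l) (av l p.1) else ι (Qform l) (avs l p.1)

-- bilinearity of nor
def norBil (l : ℕ) : Avec l →ₗ[ℂ] Avec l →ₗ[ℂ] CliffordAlgebra (Qform l) :=
  LinearMap.mk₂ ℂ (nor l)
    (fun x x' y => by simp only [nor, map_add, add_mul, mul_add]; module)
    (fun c x y => by simp only [nor, map_smul, smul_mul_assoc, mul_smul_comm]; module)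
    (fun x y y' => by simp only [nor, map_add, add_mul, mul_add]; module)
    (fun c x y => by simp only [nor, map_smul, smul_mul_assoc, mul_smul_comm]; module)

lemma norBil_apply (x y : Avec l) : norBil l x y = nor l x y := rfl

lemma single_sum (f : Fin l → ℂ) : ∑ i, f i • (Pi.single i (1 : ℂ) : Fin l → ℂ) = f := by
  funext j
  rw [Finset.sum_apply]
  simp [Pi.single_apply, mul_ite, Finset.sum_ite_eq']

lemma avec_decomp (x : Avec l) :
    x = (∑ i, x.1 i • av l i) + ∑ i, x.2 i • avs l i := by
  refine Prod.ext ?_ ?_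
  · simp only [Prod.fst_add, Prod.fst_sum, Prod.smul_fst, av, avs, smul_zero,
      Finset.sum_const_zero, add_zero]
    exact (single_sum x.1).symm
  · simp only [Prod.snd_add, Prod.snd_sum, Prod.smul_snd, av, avs, smul_zero,
      Finset.sum_const_zero, zero_add]
    exact (single_sum x.2).symm

lemma nor_basis_mem (S : Submodule ℂ (CliffordAlgebra (Qform l)))
    (hM : ∀ i j, eM l i j ∈ S) (hP : ∀ i j, eP l i j ∈ S) (hF : ∀ i j, fP l i j ∈ S)
    (x y : Avec l) : nor l x y ∈ S := by
  have key : ∀ u v : Avec l,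
      (u = x) → (v = y) → norBil l u v ∈ S := by
    intro u v hu hv
    rw [show u = (∑ i, u.1 i • av l i) + ∑ i, u.2 i • avs l i from avec_decomp u,
      show v = (∑ i, v.1 i • av l i) + ∑ i, v.2 i • avs l i from avec_decomp v]
    simp only [map_add, map_sum, map_smul, LinearMap.add_apply, LinearMap.sum_apply,
      LinearMap.smul_apply]
    refine Submodule.add_mem _ (Submodule.sum_mem _ fun i _ => Submodule.smul_mem _ _ ?_)
      (Submodule.sum_mem _ fun i _ => Submodule.smul_mem _ _ ?_)
    · refine Submodule.add_mem _ (Submodule.sum_mem _ fun j _ => Submodule.smul_mem _ _ ?_)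
        (Submodule.sum_mem _ fun j _ => Submodule.smul_mem _ _ ?_)
      · exact hP j i
      · rw [show norBil l (avs l j) (av l i) = - eM l i j by
          rw [norBil_apply, eM]; exact nor_comm _ _]
        exact Submodule.neg_mem _ (hM i j)
    · refine Submodule.add_mem _ (Submodule.sum_mem _ fun j _ => Submodule.smul_mem _ _ ?_)
        (Submodule.sum_mem _ fun j _ => Submodule.smul_mem _ _ ?_)
      · exact hM j i
      · exact hF i j
  exact key x y rfl rfl

lemma Gg_mem_gD (k : K l) : Gg l k ∈ gD l := by
  rcases k with ⟨i, j, t⟩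
  unfold Gg
  dsimp only
  split_ifs <;> first
    | exact eM_mem_gD i j
    | exact eP_mem_gD i j
    | exact fP_mem_gD i j
    | exact Submodule.zero_mem _

lemma eM_mem_span (i j : Fin l) : eM l i j ∈ Submodule.span ℂ (Set.range (Gg l)) := by
  refine Submodule.subset_span ⟨(i, j, 0), ?_⟩
  simp [Gg]

lemma eP_mem_span (i j : Fin l) : eP l i j ∈ Submodule.span ℂ (Set.range (Gg l)) := by
  rcases lt_trichotomy i j with h | h | h
  · refine Submodule.subset_span ⟨(i, j, 1), ?_⟩
    simp [Gg, h]
  · subst h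
    rw [eP, nor_self]
    exact Submodule.zero_mem _
  · rw [show eP l i j = - eP l j i from by rw [eP, eP]; exact nor_comm _ _]
    refine Submodule.neg_mem _ (Submodule.subset_span ⟨(j, i, 1), ?_⟩)
    simp [Gg, h]

lemma fP_mem_span (i j : Fin l) : fP l i j ∈ Submodule.span ℂ (Set.range (Gg l)) := by
  rcases lt_trichotomy i j with h | h | h
  · refine Submodule.subset_span ⟨(i, j, 2), ?_⟩
    simp [Gg, h]
  · subst h
    rw [fP, nor_self]
    exact Submodule.zero_mem _
  · rw [show fP l i j = - fP l j i from by rw [fP, fP]; exact nor_comm _ _]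
    refine Submodule.neg_mem _ (Submodule.subset_span ⟨(j, i, 2), ?_⟩)
    simp [Gg, h]

lemma gD_eq_span : gD l = Submodule.span ℂ (Set.range (Gg l)) := by
  apply le_antisymm
  · rw [gD, Submodule.span_le]
    rintro z ⟨x, y, rfl⟩
    exact nor_basis_mem _ eM_mem_span eP_mem_span fP_mem_span x y
  · rw [Submodule.span_le]
    rintro z ⟨k, rfl⟩
    exact Gg_mem_gD k

lemma gB_eq_span : gB l = Submodule.span ℂ (Set.range (GgB l)) := by
  apply le_antisymm
  · rw [gB]
    apply sup_le
    · rw [gD_eq_span, Submodule.span_le]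
      rintro z ⟨k, rfl⟩
      exact Submodule.subset_span ⟨Sum.inl k, rfl⟩
    · rintro z ⟨x, rfl⟩
      rw [show x = (∑ i, x.1 i • av l i) + ∑ i, x.2 i • avs l i from avec_decomp x]
      simp only [map_add, map_sum, map_smul]
      refine Submodule.add_mem _ (Submodule.sum_mem _ fun i _ => Submodule.smul_mem _ _ ?_)
        (Submodule.sum_mem _ fun i _ => Submodule.smul_mem _ _ ?_)
      · exact Submodule.subset_span ⟨Sum.inr (i, 0), rfl⟩
      · refine Submodule.subset_span ⟨Sum.inr (i, 1), ?_⟩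
        simp [GgB]
  · rw [Submodule.span_le]
    rintro z ⟨k, rfl⟩
    rcases k with k | ⟨j, s⟩
    · exact gD_le_gB (Gg_mem_gD k)
    · unfold GgB
      dsimp only [Sum.elim_inr]
      split_ifs <;> exact iota_mem_gB _

-- integer weights
def wtzK (l : ℕ) : K l → ℤ := fun k =>
  if k.2.2 = 0 then 3 ^ (k.1 : ℕ) - 3 ^ (k.2.1 : ℕ)
  else if k.2.2 = 1 then (if k.1 < k.2.1 then 3 ^ (k.1 : ℕ) + 3 ^ (k.2.1 : ℕ) else 0)
  else (if k.1 < k.2.1 then -(3 ^ (k.1 : ℕ) + 3 ^ (k.2.1 : ℕ)) else 0)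

def wtzB (l : ℕ) : KB l → ℤ :=
  Sum.elim (wtzK l) fun p => if p.2 = 0 then 3 ^ (p.1 : ℕ) else -(3 ^ (p.1 : ℕ))

def digK (l : ℕ) : K l → Fin l → ℤ := fun k =>
  if k.2.2 = 0 then (Pi.single k.1 1 - Pi.single k.2.1 1)
  else if k.2.2 = 1 then (if k.1 < k.2.1 then Pi.single k.1 1 + Pi.single k.2.1 1 else 0)
  else (if k.1 < k.2.1 then -(Pi.single k.1 1 + Pi.single k.2.1 1) else 0)

def digB (l : ℕ) : KB l → Fin l → ℤ :=
  Sum.elim (digK l) fun p =>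
    if p.2 = 0 then Pi.single p.1 1 else -(Pi.single p.1 1)

lemma single_sum_pow (i : Fin l) :
    ∑ m : Fin l, (Pi.single i 1 : Fin l → ℤ) m * 3 ^ (m : ℕ) = 3 ^ (i : ℕ) := by
  simp [Pi.single_apply, ite_mul, Finset.sum_ite_eq']

lemma wtzB_eq_sum (k : KB l) :
    wtzB l k = ∑ m : Fin l, digB l k m * 3 ^ (m : ℕ) := by
  rcases k with ⟨i, j, t⟩ | ⟨j, s⟩
  · simp only [wtzB, wtzK, digB, digK, Sum.elim_inl]
    split_ifs <;>
      simp only [Pi.sub_apply, Pi.add_apply, Pi.neg_apply, Pi.zero_apply, sub_mul, add_mul,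
        neg_mul, zero_mul, Finset.sum_sub_distrib, Finset.sum_add_distrib,
        Finset.sum_neg_distrib, Finset.sum_const_zero, single_sum_pow]
  · simp only [wtzB, digB, Sum.elim_inr]
    split_ifs <;>
      simp only [Pi.neg_apply, neg_mul, Finset.sum_neg_distrib, single_sum_pow]

lemma abs_single_le (i m : Fin l) : 0 ≤ (Pi.single i 1 : Fin l → ℤ) m ∧
    (Pi.single i 1 : Fin l → ℤ) m ≤ 1 := by
  simp only [Pi.single_apply]
  split_ifs <;> norm_num

lemma single_add_single_le {i j m : Fin l} (hij : i ≠ j) :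
    (Pi.single i 1 : Fin l → ℤ) m + (Pi.single j 1 : Fin l → ℤ) m ≤ 1 := by
  simp only [Pi.single_apply]
  split_ifs with h1 h2 h3 <;> first
    | exact absurd (h1.symm.trans h2) hij
    | norm_num

lemma digB_bound (k : KB l) (m : Fin l) : |digB l k m| ≤ 1 := by
  rw [abs_le]
  rcases k with ⟨i, j, t⟩ | ⟨j, s⟩
  · have hi := abs_single_le i m
    have hj := abs_single_le j m
    have hd : i < j → (Pi.single i 1 : Fin l → ℤ) m + (Pi.single j 1 : Fin l → ℤ) m ≤ 1 :=
      fun h => single_add_single_le (m := m) (ne_of_lt h)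
    simp only [digB, digK, Sum.elim_inl]
    split_ifs <;>
      simp only [Pi.sub_apply, Pi.add_apply, Pi.neg_apply, Pi.zero_apply] <;>
      first
        | omega
        | (have h4 := hd ‹i < j›; omega)
  · have hj := abs_single_le j m
    simp only [digB, Sum.elim_inr]
    split_ifs <;> (try simp only [Pi.neg_apply]) <;> omega

-- balanced ternary uniqueness
lemma bt_zero : ∀ (n : ℕ) (w : Fin n → ℤ), (∀ i, |w i| ≤ 2) →
    (∑ i, w i * 3 ^ (i : ℕ)) = 0 → ∀ i, w i = 0 := by
  intro n
  induction n with
  | zero => intro w _ _ i; exact absurd i.2 (by omega)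
  | succ n ih =>
    intro w hb hsum
    have hrw : ∀ i : Fin n, w i.succ * 3 ^ ((i.succ : ℕ)) = 3 * (w i.succ * 3 ^ (i : ℕ)) := by
      intro i
      rw [Fin.val_succ, pow_succ]
      ring
    rw [Fin.sum_univ_succ] at hsum
    simp only [hrw, ← Finset.mul_sum, Fin.val_zero, pow_zero, mul_one] at hsum
    set S := ∑ i : Fin n, w i.succ * 3 ^ (i : ℕ) with hS
    have hb0 := hb 0
    rw [abs_le] at hb0
    have hSz : S = 0 := by omega
    have hw0 : w 0 = 0 := by omega
    have hrest := ih (fun i => w i.succ) (fun i => hb i.succ) (by rw [← hS, hSz])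
    intro i
    refine Fin.cases hw0 (fun j => hrest j) i

lemma digB_eq_of_wtz_eq {k k' : KB l} (h : wtzB l k = wtzB l k') : digB l k = digB l k' := by
  have hsum : (∑ m : Fin l, (digB l k m - digB l k' m) * 3 ^ (m : ℕ)) = 0 := by
    simp only [sub_mul, Finset.sum_sub_distrib, ← wtzB_eq_sum, h, sub_self]
  have hb : ∀ m : Fin l, |digB l k m - digB l k' m| ≤ 2 := by
    intro m
    have h1 := digB_bound k m
    have h2 := digB_bound k' m
    rw [abs_le] at h1 h2 ⊢
    omega
  have hz := bt_zero l _ hb hsum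
  funext m
  have := hz m
  omega

lemma digB_ne_zero {k : KB l} (h : wtzB l k ≠ 0) : digB l k ≠ 0 := by
  intro h0
  apply h
  rw [wtzB_eq_sum, h0]
  simp

-- single-function equation lemmas over ℤ
lemma pow3_injective {a b : ℕ} (h : (3 : ℤ) ^ a = 3 ^ b) : a = b := by
  have h' : (3 : ℕ) ^ a = 3 ^ b := by exact_mod_cast h
  exact Nat.pow_right_injective (by norm_num) h'

section Esec
variable {i j i' j' : Fin l}

local notation "sI" i => (Pi.single i 1 : Fin l → ℤ)

lemma E00 (hij : i ≠ j) (h : (sI i) - (sI j) = (sI i') - (sI j')) : i = i' ∧ j = j' := by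
  have h1 := congrFun h i
  have h2 := congrFun h j
  simp only [ne_eq, Fin.ext_iff] at hij
  simp only [Pi.sub_apply, Pi.single_apply, Fin.ext_iff] at h1 h2
  refine ⟨Fin.ext ?_, Fin.ext ?_⟩ <;> (split_ifs at h1 h2 <;> omega)

lemma E01 (hij : i ≠ j) (h : (sI i) - (sI j) = (sI i') + (sI j')) : False := by
  have h2 := congrFun h j
  simp only [ne_eq, Fin.ext_iff] at hij
  simp only [Pi.sub_apply, Pi.add_apply, Pi.single_apply, Fin.ext_iff] at h2
  split_ifs at h2 <;> omega

lemma E02 (hij : i ≠ j) (h : (sI i) - (sI j) = -((sI i') + (sI j'))) : False := by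
  have h1 := congrFun h i
  simp only [ne_eq, Fin.ext_iff] at hij
  simp only [Pi.sub_apply, Pi.add_apply, Pi.neg_apply, Pi.single_apply, Fin.ext_iff] at h1
  split_ifs at h1 <;> omega

lemma E0A (hij : i ≠ j) (h : (sI i) - (sI j) = (sI i')) : False := by
  have h2 := congrFun h j
  simp only [ne_eq, Fin.ext_iff] at hij
  simp only [Pi.sub_apply, Pi.single_apply, Fin.ext_iff] at h2
  split_ifs at h2 <;> omega

lemma E0B (hij : i ≠ j) (h : (sI i) - (sI j) = -(sI i')) : False := by
  have h1 := congrFun h i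
  simp only [ne_eq, Fin.ext_iff] at hij
  simp only [Pi.sub_apply, Pi.neg_apply, Pi.single_apply, Fin.ext_iff] at h1
  split_ifs at h1 <;> omega

lemma E11 (hij : i < j) (hij' : i' < j') (h : (sI i) + (sI j) = (sI i') + (sI j')) :
    i = i' ∧ j = j' := by
  have h1 := congrFun h i
  have h2 := congrFun h j
  rw [Fin.lt_def] at hij hij'
  simp only [Pi.add_apply, Pi.single_apply, Fin.ext_iff] at h1 h2
  refine ⟨Fin.ext ?_, Fin.ext ?_⟩ <;> (split_ifs at h1 h2 <;> omega)

lemma E12 (h : (sI i) + (sI j) = -((sI i') + (sI j'))) : False := by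
  have h1 := congrFun h i
  simp only [Pi.add_apply, Pi.neg_apply, Pi.single_apply, Fin.ext_iff] at h1
  split_ifs at h1 <;> omega

lemma E1A (hij : i < j) (h : (sI i) + (sI j) = (sI i')) : False := by
  have h1 := congrFun h i
  have h2 := congrFun h j
  rw [Fin.lt_def] at hij
  simp only [Pi.add_apply, Pi.single_apply, Fin.ext_iff] at h1 h2
  split_ifs at h1 h2 <;> omega

lemma E1B (h : (sI i) + (sI j) = -(sI i')) : False := by
  have h1 := congrFun h i
  simp only [Pi.add_apply, Pi.neg_apply, Pi.single_apply, Fin.ext_iff] at h1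
  split_ifs at h1 <;> omega

lemma EAA (h : (sI i) = (sI i')) : i = i' := by
  have h1 := congrFun h i
  simp only [Pi.single_apply, Fin.ext_iff] at h1
  refine Fin.ext ?_
  split_ifs at h1 <;> omega

lemma EAB (h : (sI i) = -(sI i')) : False := by
  have h1 := congrFun h i
  simp only [Pi.neg_apply, Pi.single_apply, Fin.ext_iff] at h1
  split_ifs at h1 <;> omega

end Esec

lemma fin3_cases (t : Fin 3) (h0 : t ≠ 0) (h1 : t ≠ 1) : t = 2 := by
  have hv := t.isLt
  have hv0 : (t : ℕ) ≠ 0 := fun c => h0 (Fin.ext c)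
  have hv1 : (t : ℕ) ≠ 1 := fun c => h1 (Fin.ext c)
  exact Fin.ext (by omega)

lemma fin2_cases (t : Fin 2) (h0 : t ≠ 0) : t = 1 := by
  have hv := t.isLt
  have hv0 : (t : ℕ) ≠ 0 := fun c => h0 (Fin.ext c)
  exact Fin.ext (by omega)

lemma dig_shape (k : KB l) (h : wtzB l k ≠ 0) :
    (∃ i j : Fin l, i ≠ j ∧ k = Sum.inl (i, j, 0) ∧
      digB l k = (Pi.single i 1 : Fin l → ℤ) - Pi.single j 1) ∨
    (∃ i j : Fin l, i < j ∧ k = Sum.inl (i, j, 1) ∧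
      digB l k = (Pi.single i 1 : Fin l → ℤ) + Pi.single j 1) ∨
    (∃ i j : Fin l, i < j ∧ k = Sum.inl (i, j, 2) ∧
      digB l k = -((Pi.single i 1 : Fin l → ℤ) + Pi.single j 1)) ∨
    (∃ j : Fin l, k = Sum.inr (j, 0) ∧ digB l k = (Pi.single j 1 : Fin l → ℤ)) ∨
    (∃ j : Fin l, k = Sum.inr (j, 1) ∧ digB l k = -(Pi.single j 1 : Fin l → ℤ)) := by
  have hnz := digB_ne_zero h
  rcases k with ⟨i, j, t⟩ | ⟨j, s⟩
  · by_cases h0 : t = 0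
    · subst h0
      left
      refine ⟨i, j, ?_, rfl, ?_⟩
      · rintro rfl
        exact hnz (by simp [digB, digK])
      · simp [digB, digK]
    · by_cases h1 : t = 1
      · subst h1
        by_cases hlt : i < j
        · right; left
          exact ⟨i, j, hlt, rfl, by simp [digB, digK, hlt]⟩
        · exact absurd (by simp [wtzB, wtzK, hlt]) h
      · have h2 := fin3_cases t h0 h1
        subst h2
        by_cases hlt : i < j
        · right; right; left
          exact ⟨i, j, hlt, rfl, by simp [digB, digK, hlt]⟩
        · exact absurd (by simp [wtzB, wtzK, hlt]) h
  · by_cases h0 : s = 0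
    · subst h0
      right; right; right; left
      exact ⟨j, rfl, by simp [digB]⟩
    · have h1 := fin2_cases s h0
      subst h1
      right; right; right; right
      exact ⟨j, rfl, by simp [digB]⟩

lemma wtzB_inj {k k' : KB l} (hne : wtzB l k ≠ 0) (h : wtzB l k = wtzB l k') : k = k' := by
  have hd : digB l k = digB l k' := digB_eq_of_wtz_eq h
  have hne' : wtzB l k' ≠ 0 := h ▸ hne
  rcases dig_shape k hne with ⟨i,j,hij,rfl,e⟩ | ⟨i,j,hij,rfl,e⟩ | ⟨i,j,hij,rfl,e⟩ |
      ⟨j,rfl,e⟩ | ⟨j,rfl,e⟩ <;>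
    rcases dig_shape k' hne' with ⟨i',j',hij',rfl,e'⟩ | ⟨i',j',hij',rfl,e'⟩ |
        ⟨i',j',hij',rfl,e'⟩ | ⟨j',rfl,e'⟩ | ⟨j',rfl,e'⟩ <;>
    rw [e, e'] at hd
  · obtain ⟨rfl, rfl⟩ := E00 hij hd; rfl
  · exact (E01 hij hd).elim
  · exact (E02 hij hd).elim
  · exact (E0A hij hd).elim
  · exact (E0B hij hd).elim
  · exact (E01 hij' hd.symm).elim
  · obtain ⟨rfl, rfl⟩ := E11 hij hij' hd; rfl
  · exact (E12 hd).elim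
  · exact (E1A hij hd).elim
  · exact (E1B hd).elim
  · exact (E02 hij' hd.symm).elim
  · exact (E12 (neg_eq_iff_eq_neg.mp hd)).elim
  · obtain ⟨rfl, rfl⟩ := E11 hij hij' (neg_inj.mp hd); rfl
  · exact (E1B (neg_eq_iff_eq_neg.mp hd)).elim
  · exact (E1A hij (neg_inj.mp hd)).elim
  · exact (E0A hij' hd.symm).elim
  · exact (E1A hij' hd.symm).elim
  · exact (E1B (neg_eq_iff_eq_neg.mp hd.symm)).elim
  · rw [EAA hd]
  · exact (EAB hd).elim
  · exact (E0B hij' hd.symm).elim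
  · exact (E1B hd.symm).elim
  · exact (E1A hij' (neg_inj.mp hd).symm).elim
  · exact (EAB hd.symm).elim
  · rw [EAA (neg_inj.mp hd)]

lemma GgB_inl0 (i j : Fin l) : GgB l (Sum.inl (i, j, 0)) = eM l i j := by
  simp [GgB, Gg]

lemma GgB_inl1 (i j : Fin l) :
    GgB l (Sum.inl (i, j, 1)) = if i < j then eP l i j else 0 := by
  simp [GgB, Gg]

lemma GgB_inl2 (i j : Fin l) :
    GgB l (Sum.inl (i, j, 2)) = if i < j then fP l i j else 0 := by
  simp [GgB, Gg]

lemma GgB_inr0 (j : Fin l) : GgB l (Sum.inr (j, 0)) = ι (Qform l) (av l j) := by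
  simp [GgB]

lemma GgB_inr1 (j : Fin l) : GgB l (Sum.inr (j, 1)) = ι (Qform l) (avs l j) := by
  simp [GgB]

lemma wtzB_inl0 (i j : Fin l) :
    wtzB l (Sum.inl (i, j, 0)) = 3 ^ (i : ℕ) - 3 ^ (j : ℕ) := by
  simp [wtzB, wtzK]

lemma wtzB_inl1 (i j : Fin l) :
    wtzB l (Sum.inl (i, j, 1)) = if i < j then 3 ^ (i : ℕ) + 3 ^ (j : ℕ) else 0 := by
  simp [wtzB, wtzK]

lemma wtzB_inl2 (i j : Fin l) :
    wtzB l (Sum.inl (i, j, 2)) = if i < j then -(3 ^ (i : ℕ) + 3 ^ (j : ℕ)) else 0 := by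
  simp [wtzB, wtzK]

lemma wtzB_inr0 (j : Fin l) : wtzB l (Sum.inr (j, 0)) = 3 ^ (j : ℕ) := by
  simp [wtzB]

lemma wtzB_inr1 (j : Fin l) : wtzB l (Sum.inr (j, 1)) = -(3 ^ (j : ℕ)) := by
  simp [wtzB]

lemma hstar_GgB (k : KB l) :
    ⁅hstar l, GgB l k⁆ = ((wtzB l k : ℤ) : ℂ) • GgB l k := by
  rcases k with ⟨i, j, t⟩ | ⟨j, s⟩
  · by_cases h0 : t = 0
    · subst h0
      rw [GgB_inl0, wtzB_inl0, hstar_eM]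
      norm_num
    · by_cases h1 : t = 1
      · subst h1
        rw [GgB_inl1, wtzB_inl1]
        by_cases hlt : i < j
        · rw [if_pos hlt, if_pos hlt, hstar_eP]
          norm_num
        · rw [if_neg hlt, if_neg hlt]
          simp
      · have h2 := fin3_cases t h0 h1
        subst h2
        rw [GgB_inl2, wtzB_inl2]
        by_cases hlt : i < j
        · rw [if_pos hlt, if_pos hlt, hstar_fP]
          norm_num
        · rw [if_neg hlt, if_neg hlt]
          simp
  · by_cases h0 : s = 0
    · subst h0
      rw [GgB_inr0, wtzB_inr0, hstar_A]
      norm_num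
    · have h1 := fin2_cases s h0
      subst h1
      rw [GgB_inr1, wtzB_inr1, hstar_B]
      norm_num

lemma eMdiag_sum (i : Fin l) :
    eM l i i = ∑ m : Fin l, (Pi.single i 1 : Fin l → ℂ) m • eM l m m := by
  simp [Pi.single_apply, ite_smul, Finset.sum_ite_eq']

lemma GgB_wtz_zero {k : KB l} (h : wtzB l k = 0) :
    ∃ d : Fin l → ℂ, GgB l k = ∑ m : Fin l, d m • eM l m m := by
  rcases k with ⟨i, j, t⟩ | ⟨j, s⟩
  · by_cases h0 : t = 0
    · subst h0
      rw [wtzB_inl0, sub_eq_zero] at h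
      have hij : i = j := Fin.ext (pow3_injective h)
      subst hij
      exact ⟨Pi.single i 1, by rw [GgB_inl0]; exact eMdiag_sum i⟩
    · by_cases h1 : t = 1
      · subst h1
        by_cases hlt : i < j
        · exfalso
          rw [wtzB_inl1, if_pos hlt] at h
          have p1 : (0:ℤ) < 3 ^ (i : ℕ) := by positivity
          have p2 : (0:ℤ) < 3 ^ (j : ℕ) := by positivity
          omega
        · refine ⟨0, ?_⟩
          rw [GgB_inl1, if_neg hlt]
          simp
      · have h2 := fin3_cases t h0 h1
        subst h2
        by_cases hlt : i < j
        · exfalso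
          rw [wtzB_inl2, if_pos hlt] at h
          have p1 : (0:ℤ) < 3 ^ (i : ℕ) := by positivity
          have p2 : (0:ℤ) < 3 ^ (j : ℕ) := by positivity
          omega
        · refine ⟨0, ?_⟩
          rw [GgB_inl2, if_neg hlt]
          simp
  · exfalso
    have p1 : (0:ℤ) < 3 ^ (j : ℕ) := by positivity
    by_cases h0 : s = 0
    · subst h0; rw [wtzB_inr0] at h; omega
    · have h1 := fin2_cases s h0
      subst h1; rw [wtzB_inr1] at h; omega

-- bracket with a diagonal combination
lemma lie_sum_smul (x : CliffordAlgebra (Qform l)) (d : Fin l → ℂ)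
    (f : Fin l → CliffordAlgebra (Qform l)) :
    ⁅x, ∑ m : Fin l, d m • f m⁆ = ∑ m : Fin l, d m • ⁅x, f m⁆ := by
  simp only [Ring.lie_def, Finset.mul_sum, Finset.sum_mul, mul_smul_comm, smul_mul_assoc,
    ← Finset.sum_sub_distrib, smul_sub]

lemma lie_eM_diag (p q : Fin l) (d : Fin l → ℂ) :
    ⁅eM l p q, ∑ m : Fin l, d m • eM l m m⁆ = (d q - d p) • eM l p q := by
  rw [lie_sum_smul]
  have step : ∀ m : Fin l, d m • ⁅eM l p q, eM l m m⁆
      = (if m = q then d m • eM l p q else 0) - (if m = p then d m • eM l p q else 0) := by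
    intro m
    rw [lie_eM_eM]
    by_cases h1 : m = q
    · subst h1
      by_cases h2 : m = p
      · subst h2; simp [del]
      · simp [del, h2, Ne.symm h2, eq_comm]
    · by_cases h2 : m = p
      · subst h2
        simp [del, h1, Ne.symm h1, eq_comm]
      · simp [del, h1, h2, Ne.symm h1, Ne.symm h2, eq_comm]
  simp only [step, Finset.sum_sub_distrib, Finset.sum_ite_eq', Finset.mem_univ, if_true]
  rw [sub_smul]

lemma lie_eP_diag (p q : Fin l) (d : Fin l → ℂ) :
    ⁅eP l p q, ∑ m : Fin l, d m • eM l m m⁆ = (-(d p + d q)) • eP l p q := by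
  rw [lie_sum_smul]
  have step : ∀ m : Fin l, d m • ⁅eP l p q, eM l m m⁆
      = -((if m = p then d m • eP l p q else 0) + (if m = q then d m • eP l p q else 0)) := by
    intro m
    rw [← lie_skew, wt_eP]
    by_cases h1 : m = p
    · subst h1
      by_cases h2 : m = q
      · subst h2; simp [del]; try module
      · simp [del, h2, Ne.symm h2, eq_comm]; try module
    · by_cases h2 : m = q
      · subst h2
        simp [del, h1, Ne.symm h1, eq_comm]; try module
      · simp [del, h1, h2, Ne.symm h1, Ne.symm h2, eq_comm]
  simp only [step]
  rw [Finset.sum_neg_distrib, Finset.sum_add_distrib, Finset.sum_ite_eq', Finset.sum_ite_eq']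
  simp only [Finset.mem_univ, if_true]
  module

-- abstract eigenvector splitting
lemma eigen_split {M : Type*} [AddCommGroup M] [Module ℂ M] (I : Submodule ℂ M)
    (T : M →ₗ[ℂ] M) (hI : ∀ x ∈ I, T x ∈ I) :
    ∀ (s : Finset ℂ) (x : ℂ → M), (∀ a ∈ s, T (x a) = a • x a) →
      (∑ a ∈ s, x a) ∈ I → ∀ a ∈ s, x a ∈ I := by
  intro s
  induction s using Finset.induction_on with
  | empty => intro x _ _ a ha; exact absurd ha (Finset.notMem_empty a)
  | @insert a s ha ih =>
    intro x hx hsum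
    rw [Finset.sum_insert ha] at hsum
    have hTv : T (x a + ∑ b ∈ s, x b) ∈ I := hI _ hsum
    have hw : T (x a + ∑ b ∈ s, x b) - a • (x a + ∑ b ∈ s, x b)
        = ∑ b ∈ s, (b - a) • x b := by
      rw [map_add, hx a (Finset.mem_insert_self a s), map_sum]
      rw [Finset.sum_congr rfl (fun b hb => hx b (Finset.mem_insert_of_mem hb))]
      rw [smul_add, Finset.smul_sum]
      simp only [sub_smul]
      rw [Finset.sum_sub_distrib]
      abel
    have hw_mem : (∑ b ∈ s, (b - a) • x b) ∈ I := by
      rw [← hw]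
      exact Submodule.sub_mem _ hTv (Submodule.smul_mem _ _ hsum)
    have hrest : ∀ b ∈ s, (b - a) • x b ∈ I := by
      refine ih (fun b => (b - a) • x b) (fun b hb => ?_) hw_mem
      rw [map_smul, hx b (Finset.mem_insert_of_mem hb), smul_smul, smul_smul, mul_comm]
    have hrest' : ∀ b ∈ s, x b ∈ I := by
      intro b hb
      have hba : b - a ≠ 0 := sub_ne_zero.mpr (fun hc => ha (hc ▸ hb))
      have := Submodule.smul_mem _ (b - a)⁻¹ (hrest b hb)
      rwa [smul_smul, inv_mul_cancel₀ hba, one_smul] at this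
    intro c hc
    rcases Finset.mem_insert.mp hc with rfl | hc'
    · have hsub : (∑ b ∈ s, x b) ∈ I := Submodule.sum_mem _ hrest'
      have := Submodule.sub_mem _ hsum hsub
      rwa [add_sub_cancel_right] at this
    · exact hrest' c hc'

lemma third (hl3 : 3 ≤ l) (a b : Fin l) : ∃ c : Fin l, c ≠ a ∧ c ≠ b := by
  obtain ⟨v, hv1, hv2, hv3⟩ : ∃ v : ℕ, v < l ∧ v ≠ (a : ℕ) ∧ v ≠ (b : ℕ) := by
    by_cases ha0 : (a : ℕ) = 0
    · by_cases hb1 : (b : ℕ) = 1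
      · exact ⟨2, by omega, by omega, by omega⟩
      · exact ⟨1, by omega, by omega, by omega⟩
    · by_cases hb0 : (b : ℕ) = 0
      · by_cases ha1 : (a : ℕ) = 1
        · exact ⟨2, by omega, by omega, by omega⟩
        · exact ⟨1, by omega, by omega, by omega⟩
      · exact ⟨0, by omega, by omega, by omega⟩
  exact ⟨⟨v, hv1⟩, Fin.ne_of_val_ne hv2, Fin.ne_of_val_ne hv3⟩

section Chain

variable (I : Submodule ℂ (CliffordAlgebra (Qform l)))

lemma chain (hst : ∀ u ∈ gD l, ∀ v ∈ I, ⁅u, v⁆ ∈ I) (hl3 : 3 ≤ l)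
    {a b : Fin l} (hab : a ≠ b) (h : eM l a b ∈ I) :
    (∀ i j, eM l i j ∈ I) ∧ (∀ i j, eP l i j ∈ I) ∧ (∀ i j, fP l i j ∈ I) := by
  have spread1 : ∀ p q : Fin l, p ≠ q → eM l p q ∈ I → ∀ m, m ≠ p → eM l p m ∈ I := by
    intro p q hpq hpq' m hmp
    by_cases hmq : m = q
    · subst hmq; exact hpq'
    · have hb := hst (eM l q m) (eM_mem_gD q m) _ hpq'
      rw [lie_eM_eM, del_ne hmp, del_self, zero_smul, one_smul, zero_sub] at hb
      exact (Submodule.neg_mem_iff _).mp hb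
  have spread2 : ∀ p q : Fin l, p ≠ q → eM l p q ∈ I → ∀ i, i ≠ q → eM l i q ∈ I := by
    intro p q hpq h' i hiq
    by_cases hip : i = p
    · subst hip; exact h'
    · have hb := hst (eM l i p) (eM_mem_gD i p) _ h'
      rw [lie_eM_eM, del_self, one_smul, del_ne hiq, zero_smul, sub_zero] at hb
      exact hb
  have hMoff : ∀ i j, i ≠ j → eM l i j ∈ I := by
    intro i j hij
    by_cases hja : j = a
    · rw [hja]
      have hia : i ≠ a := hja ▸ hij
      obtain ⟨c, hca, hci⟩ := third hl3 a i
      have h1 : eM l a c ∈ I := spread1 a b hab h c hca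
      have h2 : eM l i c ∈ I := spread2 a c (Ne.symm hca) h1 i (Ne.symm hci)
      exact spread1 i c (Ne.symm hci) h2 a (Ne.symm hia)
    · have h1 : eM l a j ∈ I := spread1 a b hab h j hja
      exact spread2 a j (Ne.symm hja) h1 i hij
  have hPoff : ∀ i j, i ≠ j → eP l i j ∈ I := by
    intro i j hij
    obtain ⟨c, hci, hcj⟩ := third hl3 i j
    have hv : eM l i c ∈ I := hMoff i c (Ne.symm hci)
    have hb := hst (eP l c j) (eP_mem_gD c j) _ hv
    have heq : ⁅eP l c j, eM l i c⁆ = - eP l i j := by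
      rw [← lie_skew, lie_eM_eP, del_self, one_smul, del_ne hcj, zero_smul, sub_zero]
    rw [heq] at hb
    exact (Submodule.neg_mem_iff _).mp hb
  have hFoff : ∀ p q, p ≠ q → fP l p q ∈ I := by
    intro p q hpq
    obtain ⟨c, hcp, hcq⟩ := third hl3 p q
    have hv : eM l c q ∈ I := hMoff c q hcq
    have hb := hst (fP l c p) (fP_mem_gD c p) _ hv
    have heq : ⁅fP l c p, eM l c q⁆ = - fP l p q := by
      rw [← lie_skew, lie_eM_fP, del_self, one_smul, del_ne hcp, zero_smul, sub_zero]
    rw [heq] at hb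
    exact (Submodule.neg_mem_iff _).mp hb
  have hH : ∀ i, eM l i i ∈ I := by
    intro i
    obtain ⟨j, hji, _⟩ := third hl3 i i
    have hsum : eM l i i + eM l j j ∈ I := by
      have hb := hst (eP l i j) (eP_mem_gD i j) _ (hFoff i j (Ne.symm hji))
      rw [lie_eP_fP, del_self, del_self, del_ne (Ne.symm hji), del_ne hji, one_smul, one_smul,
        zero_smul, zero_smul, sub_zero, sub_zero] at hb
      exact hb
    have hdiff : eM l j j - eM l i i ∈ I := by
      have hb := hst (eM l j i) (eM_mem_gD j i) _ (hMoff i j (Ne.symm hji))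
      rw [lie_eM_eM, del_self, del_self, one_smul, one_smul] at hb
      exact hb
    have hcomb := Submodule.sub_mem _ hsum hdiff
    rw [show eM l i i + eM l j j - (eM l j j - eM l i i) = (2 : ℂ) • eM l i i by module]
      at hcomb
    have h2 := Submodule.smul_mem _ ((2 : ℂ)⁻¹) hcomb
    rwa [smul_smul, inv_mul_cancel₀ (by norm_num : (2:ℂ) ≠ 0), one_smul] at h2
  refine ⟨fun i j => ?_, fun i j => ?_, fun i j => ?_⟩
  · by_cases hij : i = j
    · subst hij; exact hH i
    · exact hMoff i j hij
  · by_cases hij : i = j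
    · subst hij; rw [eP, nor_self]; exact Submodule.zero_mem _
    · exact hPoff i j hij
  · by_cases hij : i = j
    · subst hij; rw [fP, nor_self]; exact Submodule.zero_mem _
    · exact hFoff i j hij

-- entry points into the chain
lemma entry_eP (hst : ∀ u ∈ gD l, ∀ v ∈ I, ⁅u, v⁆ ∈ I) (hl3 : 3 ≤ l)
    {i j : Fin l} (hij : i ≠ j) (h : eP l i j ∈ I) :
    ∃ p q : Fin l, p ≠ q ∧ eM l p q ∈ I := by
  obtain ⟨c, hci, hcj⟩ := third hl3 i j
  have hb := hst (fP l i c) (fP_mem_gD i c) _ h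
  have heq : ⁅fP l i c, eP l i j⁆ = - eM l j c := by
    rw [← lie_skew, lie_eP_fP, del_ne (show j ≠ c from fun hx => hcj hx.symm), del_self,
      del_ne (show i ≠ c from fun hx => hci hx.symm), del_ne (Ne.symm hij),
      zero_smul, one_smul, zero_smul, zero_smul, zero_add, sub_zero, sub_zero]
  rw [heq] at hb
  exact ⟨j, c, fun hx => hcj hx.symm, (Submodule.neg_mem_iff _).mp hb⟩

lemma entry_fP (hst : ∀ u ∈ gD l, ∀ v ∈ I, ⁅u, v⁆ ∈ I) (hl3 : 3 ≤ l)
    {i j : Fin l} (hij : i ≠ j) (h : fP l i j ∈ I) :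
    ∃ p q : Fin l, p ≠ q ∧ eM l p q ∈ I := by
  obtain ⟨c, hci, hcj⟩ := third hl3 i j
  have hb := hst (eP l i c) (eP_mem_gD i c) _ h
  have heq : ⁅eP l i c, fP l i j⁆ = eM l c j := by
    rw [lie_eP_fP, del_ne (show c ≠ j from hcj), del_self, del_ne hij, del_ne hci,
      zero_smul, one_smul, zero_smul, zero_smul, zero_add, sub_zero, sub_zero]
  rw [heq] at hb
  exact ⟨c, j, hcj, hb⟩

end Chain

-- Step A : weight splitting
open Finset in
lemma stepA {κ : Type*} [Fintype κ] [DecidableEq κ] (emb : κ → KB l)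
    (hemb : Function.Injective emb)
    (I : Submodule ℂ (CliffordAlgebra (Qform l)))
    (hstarI : ∀ x ∈ I, ⁅hstar l, x⁆ ∈ I)
    (c : κ → ℂ) (hv : (∑ k : κ, c k • GgB l (emb k)) ∈ I)
    (hv0 : (∑ k : κ, c k • GgB l (emb k)) ≠ 0) :
    (∃ k : κ, wtzB l (emb k) ≠ 0 ∧ GgB l (emb k) ∈ I) ∨
    (∃ d : Fin l → ℂ, (∑ m : Fin l, d m • eM l m m) ∈ I ∧ ∃ j, d j ≠ 0) := by
  classical
  set wC : κ → ℂ := fun k => ((wtzB l (emb k) : ℤ) : ℂ) with hwC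
  set T : CliffordAlgebra (Qform l) →ₗ[ℂ] CliffordAlgebra (Qform l) :=
    { toFun := fun x => ⁅hstar l, x⁆
      map_add' := fun x y => lie_add _ _ _
      map_smul' := fun r x => by simp } with hT
  set s : Finset ℂ := Finset.image wC Finset.univ with hs
  set x : ℂ → CliffordAlgebra (Qform l) :=
    fun a => ∑ k ∈ Finset.univ.filter (fun k => wC k = a), c k • GgB l (emb k) with hx
  have hsum : (∑ a ∈ s, x a) = ∑ k : κ, c k • GgB l (emb k) := by
    rw [hs, hx]
    rw [Finset.sum_fiberwise_eq_sum_filter Finset.univ (Finset.image wC Finset.univ) wC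
      (fun k => c k • GgB l (emb k))]
    congr 1
    refine Finset.filter_true_of_mem fun k _ => ?_
    exact Finset.mem_image_of_mem wC (Finset.mem_univ k)
  have hxeig : ∀ a ∈ s, T (x a) = a • x a := by
    intro a _
    rw [hx]
    dsimp only
    rw [map_sum, Finset.smul_sum]
    refine Finset.sum_congr rfl fun k hk => ?_
    have hk' : wC k = a := (Finset.mem_filter.mp hk).2
    rw [hT]
    dsimp only [LinearMap.coe_mk, AddHom.coe_mk]
    rw [lie_smul, hstar_GgB, ← hk', hwC]
    dsimp only
    rw [smul_smul, smul_smul, mul_comm]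
  have hxI : ∀ a ∈ s, x a ∈ I := by
    refine eigen_split I T (fun y hy => hstarI y hy) s x hxeig ?_
    rw [hsum]; exact hv
  have hex : ∃ a ∈ s, x a ≠ 0 := by
    by_contra hc
    push_neg at hc
    apply hv0
    rw [← hsum]
    exact Finset.sum_eq_zero hc
  obtain ⟨a, has, hxa⟩ := hex
  by_cases ha0 : a = 0
  · subst ha0
    right
    set fib := Finset.univ.filter (fun k => wC k = 0) with hfib
    have hwz : ∀ k ∈ fib, wtzB l (emb k) = 0 := by
      intro k hk
      have h1 := (Finset.mem_filter.mp hk).2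
      have h2 : ((wtzB l (emb k) : ℤ) : ℂ) = 0 := h1
      exact_mod_cast h2
    set dd : κ → Fin l → ℂ := fun k =>
      if h : wtzB l (emb k) = 0 then Classical.choose (GgB_wtz_zero h) else 0 with hdd
    have hdd' : ∀ k ∈ fib, GgB l (emb k) = ∑ m : Fin l, dd k m • eM l m m := by
      intro k hk
      rw [hdd]
      dsimp only
      rw [dif_pos (hwz k hk)]
      exact Classical.choose_spec (GgB_wtz_zero (hwz k hk))
    set D : Fin l → ℂ := fun m => ∑ k ∈ fib, c k * dd k m with hD
    have hx0 : x 0 = ∑ m : Fin l, D m • eM l m m := by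
      calc x 0 = ∑ k ∈ fib, ∑ m : Fin l, (c k * dd k m) • eM l m m := by
            refine Finset.sum_congr rfl fun k hk => ?_
            rw [hdd' k hk, Finset.smul_sum]
            exact Finset.sum_congr rfl fun m _ => (smul_smul _ _ _)
        _ = ∑ m : Fin l, ∑ k ∈ fib, (c k * dd k m) • eM l m m := Finset.sum_comm
        _ = ∑ m : Fin l, D m • eM l m m := by
            refine Finset.sum_congr rfl fun m _ => ?_
            rw [hD, Finset.sum_smul]
    refine ⟨D, ?_, ?_⟩
    · rw [← hx0]
      exact hxI 0 has
    · by_contra hcon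
      push_neg at hcon
      apply hxa
      rw [hx0]
      exact Finset.sum_eq_zero fun m _ => by rw [hcon m, zero_smul]
  · left
    set fib := Finset.univ.filter (fun k => wC k = a) with hfib
    have huniq : ∀ k ∈ fib, ∀ k' ∈ fib, k = k' := by
      intro k hk k' hk'
      have h1 : wC k = a := (Finset.mem_filter.mp hk).2
      have h2 : wC k' = a := (Finset.mem_filter.mp hk').2
      have hz : wtzB l (emb k) ≠ 0 := by
        intro hzz
        apply ha0
        rw [← h1]
        show ((wtzB l (emb k) : ℤ) : ℂ) = 0
        exact_mod_cast hzz
      have hweq : wtzB l (emb k) = wtzB l (emb k') := by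
        have hcc : ((wtzB l (emb k) : ℤ) : ℂ) = ((wtzB l (emb k') : ℤ) : ℂ) := h1.trans h2.symm
        exact_mod_cast hcc
      exact hemb (wtzB_inj hz hweq)
    have hfibne : fib.Nonempty := by
      by_contra hcon
      rw [Finset.not_nonempty_iff_eq_empty] at hcon
      apply hxa
      rw [hx]
      dsimp only
      rw [← hfib, hcon, Finset.sum_empty]
    obtain ⟨k₀, hk₀⟩ := hfibne
    have hfib_eq : fib = {k₀} := by
      refine Finset.eq_singleton_iff_unique_mem.mpr ⟨hk₀, fun k hk => huniq k hk k₀ hk₀⟩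
    have hxa_eq : x a = c k₀ • GgB l (emb k₀) := by
      rw [hx]
      dsimp only
      rw [← hfib, hfib_eq, Finset.sum_singleton]
    have hc0 : c k₀ ≠ 0 := by
      intro hcz
      apply hxa
      rw [hxa_eq, hcz, zero_smul]
    refine ⟨k₀, ?_, ?_⟩
    · intro hzz
      apply ha0
      have hmem := (Finset.mem_filter.mp hk₀).2
      rw [← hmem]
      show ((wtzB l (emb k₀) : ℤ) : ℂ) = 0
      exact_mod_cast hzz
    · have := Submodule.smul_mem _ (c k₀)⁻¹ (hxa_eq ▸ hxI a has)
      rwa [smul_smul, inv_mul_cancel₀ hc0, one_smul] at this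

-- The Fock representation, used to verify non-vanishing
abbrev Ext (l : ℕ) : Type := ExteriorAlgebra ℂ (Fin l → ℂ)

def dualBil (l : ℕ) : (Fin l → ℂ) →ₗ[ℂ] Module.Dual ℂ (Fin l → ℂ) :=
  LinearMap.mk₂ ℂ (fun y x => ∑ i, y i * x i)
    (fun u u' v => by simp [add_mul, Finset.sum_add_distrib])
    (fun c u v => by simp [Finset.mul_sum, mul_assoc])
    (fun u v v' => by simp [mul_add, Finset.sum_add_distrib])
    (fun c u v => by simp [Finset.mul_sum, mul_left_comm])

lemma dualBil_apply (y x : Fin l → ℂ) : dualBil l y x = ∑ i, y i * x i := rfl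

def fockF (l : ℕ) : Avec l →ₗ[ℂ] Module.End ℂ (Ext l) where
  toFun v := LinearMap.mulLeft ℂ (ExteriorAlgebra.ι ℂ v.1)
    + CliffordAlgebra.contractLeft (dualBil l v.2)
  map_add' v w := by
    refine LinearMap.ext fun z => ?_
    simp only [Prod.fst_add, Prod.snd_add, map_add, LinearMap.add_apply,
      LinearMap.mulLeft_apply, add_mul]
    abel
  map_smul' a v := by
    refine LinearMap.ext fun z => ?_
    simp only [Prod.smul_fst, Prod.smul_snd, map_smul, RingHom.id_apply, LinearMap.smul_apply,
      LinearMap.add_apply, LinearMap.mulLeft_apply, smul_mul_assoc, smul_add]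

lemma fockF_cond (v : Avec l) :
    fockF l v * fockF l v = algebraMap ℂ (Module.End ℂ (Ext l)) (Qform l v) := by
  refine LinearMap.ext fun z => ?_
  rw [Module.End.mul_apply, Module.algebraMap_end_apply]
  simp only [fockF, LinearMap.coe_mk, AddHom.coe_mk, LinearMap.add_apply,
    LinearMap.mulLeft_apply]
  rw [map_add]
  rw [CliffordAlgebra.contractLeft_ι_mul]
  have hq : Qform l v = dualBil l v.2 v.1 := by
    rw [dualBil_apply]
    show Bform l v v = _
    rw [Bform_apply]
    exact Finset.sum_congr rfl fun i _ => mul_comm _ _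
  rw [mul_add, ← mul_assoc, CliffordAlgebra.ι_sq_scalar,
    CliffordAlgebra.contractLeft_contractLeft, hq]
  simp only [QuadraticMap.zero_apply, map_zero, zero_mul, zero_add, add_zero]
  module

def fock (l : ℕ) : CliffordAlgebra (Qform l) →ₐ[ℂ] Module.End ℂ (Ext l) :=
  CliffordAlgebra.lift (Qform l) ⟨fockF l, fockF_cond⟩

lemma fock_ι (v : Avec l) : fock l (ι (Qform l) v) = fockF l v :=
  CliffordAlgebra.lift_ι_apply _ _ _

-- evaluation on the one-particle state ξᵢ
lemma fock_avs_xi (i p : Fin l) :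
    fock l (ι (Qform l) (avs l i)) (ExteriorAlgebra.ι ℂ (Pi.single p 1)) =
      algebraMap ℂ (Ext l) (del i p) := by
  rw [fock_ι]
  simp only [fockF, LinearMap.coe_mk, AddHom.coe_mk, avs, LinearMap.add_apply,
    LinearMap.mulLeft_apply, map_zero, zero_mul, zero_add]
  rw [CliffordAlgebra.contractLeft_ι]
  congr 1
  rw [dualBil_apply, del]
  simp [Pi.single_apply, ite_and, Finset.sum_ite_eq, eq_comm]

lemma fock_av_one (i : Fin l) :
    fock l (ι (Qform l) (av l i)) 1 = ExteriorAlgebra.ι ℂ (Pi.single i 1) := by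
  rw [fock_ι]
  simp only [fockF, LinearMap.coe_mk, AddHom.coe_mk, av, LinearMap.add_apply,
    LinearMap.mulLeft_apply, map_zero, LinearMap.zero_apply, mul_one, add_zero]

lemma fock_eM_diag_xi (i p : Fin l) :
    fock l (eM l i i) (ExteriorAlgebra.ι ℂ (Pi.single p 1)) =
      del i p • ExteriorAlgebra.ι ℂ (Pi.single i 1)
        - (2⁻¹ : ℂ) • ExteriorAlgebra.ι ℂ (Pi.single p 1) := by
  rw [eM, nor_eq, pol_av_avs, del_self]
  rw [map_sub, map_mul]
  simp only [LinearMap.sub_apply, Module.End.mul_apply]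
  rw [fock_avs_xi, AlgHom.commutes, Module.algebraMap_end_apply]
  congr 1
  · rw [Algebra.algebraMap_eq_smul_one, map_smul, fock_av_one]
  · norm_num

lemma single_ne_zero' (p : Fin l) : (Pi.single p 1 : Fin l → ℂ) ≠ 0 := by
  intro h
  have := congrFun h p
  rw [Pi.single_eq_same] at this
  exact one_ne_zero this

lemma xi_ne_zero (p : Fin l) : (ExteriorAlgebra.ι ℂ (Pi.single p (1:ℂ)) : Ext l) ≠ 0 := by
  intro h
  exact single_ne_zero' p ((ExteriorAlgebra.ι_inj ℂ _ 0).mp (by rw [h, map_zero]))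

lemma eM_diag_sub_ne_zero {i0 i1 : Fin l} (h01 : i0 ≠ i1) :
    eM l i0 i0 - eM l i1 i1 ≠ 0 := by
  intro h
  have happ := congrArg (fun z => fock l z (ExteriorAlgebra.ι ℂ (Pi.single i0 1))) h
  simp only [map_sub, LinearMap.sub_apply, map_zero, LinearMap.zero_apply] at happ
  rw [fock_eM_diag_xi, fock_eM_diag_xi, del_self, del_ne (Ne.symm h01), one_smul,
    zero_smul] at happ
  have hsimp : (ExteriorAlgebra.ι ℂ (Pi.single i0 (1:ℂ)) : Ext l)
      - (2⁻¹ : ℂ) • ExteriorAlgebra.ι ℂ (Pi.single i0 1)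
      - ((0 : Ext l) - (2⁻¹ : ℂ) • ExteriorAlgebra.ι ℂ (Pi.single i0 1))
      = ExteriorAlgebra.ι ℂ (Pi.single i0 1) := by module
  rw [hsimp] at happ
  exact xi_ne_zero i0 happ

lemma eM_diag_smul_ne_zero (a : ℂ) (ha : a ≠ 0) (i0 : Fin l) :
    a • eM l i0 i0 ≠ 0 := by
  intro h
  have happ := congrArg (fun z => fock l z (ExteriorAlgebra.ι ℂ (Pi.single i0 1))) h
  simp only [map_smul, LinearMap.smul_apply, map_zero, LinearMap.zero_apply] at happ
  rw [fock_eM_diag_xi, del_self, one_smul] at happ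
  have : (ExteriorAlgebra.ι ℂ (Pi.single i0 (1:ℂ)) : Ext l)
      - (2⁻¹ : ℂ) • ExteriorAlgebra.ι ℂ (Pi.single i0 1) = (2⁻¹ : ℂ) • ExteriorAlgebra.ι ℂ (Pi.single i0 1) := by
    module
  rw [this, smul_smul] at happ
  have h2 : a * 2⁻¹ ≠ 0 := by
    simp [ha]
  exact xi_ne_zero i0 (by
    have := smul_eq_zero.mp happ
    rcases this with hc | hz
    · exact absurd hc h2
    · exact hz)

lemma smul_cancel_mem (I : Submodule ℂ (CliffordAlgebra (Qform l))) {γ : ℂ} (hγ : γ ≠ 0)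
    {z : CliffordAlgebra (Qform l)} (h : γ • z ∈ I) : z ∈ I := by
  have := Submodule.smul_mem _ γ⁻¹ h
  rwa [smul_smul, inv_mul_cancel₀ hγ, one_smul] at this

lemma gD_ideal (hl : 4 ≤ l) (I : Submodule ℂ (CliffordAlgebra (Qform l))) (hle : I ≤ gD l)
    (hst : ∀ u ∈ gD l, ∀ v ∈ I, ⁅u, v⁆ ∈ I) : I = ⊥ ∨ I = gD l := by
  by_cases hbot : I = ⊥
  · exact Or.inl hbot
  right
  have hl3 : 3 ≤ l := by omega
  have finish : ((∀ i j, eM l i j ∈ I) ∧ (∀ i j, eP l i j ∈ I) ∧ (∀ i j, fP l i j ∈ I))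
      → I = gD l := by
    intro hch
    refine le_antisymm hle ?_
    rw [gD]
    refine Submodule.span_le.mpr ?_
    rintro z ⟨x, y, rfl⟩
    exact nor_basis_mem I hch.1 hch.2.1 hch.2.2 x y
  obtain ⟨v, hvI, hv0⟩ := Submodule.exists_mem_ne_zero_of_ne_bot hbot
  have hvD : v ∈ Submodule.span ℂ (Set.range (Gg l)) := by
    rw [← gD_eq_span]; exact hle hvI
  obtain ⟨c, hc⟩ := (Submodule.mem_span_range_iff_exists_fun ℂ).mp hvD
  have hstarI : ∀ x ∈ I, ⁅hstar l, x⁆ ∈ I := fun x hx => hst _ hstar_mem_gD x hx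
  have hGgB : (∑ k : K l, c k • GgB l (Sum.inl k)) = v := hc
  have hstep := stepA (Sum.inl : K l → KB l) Sum.inl_injective I hstarI c
    (by rw [hGgB]; exact hvI) (by rw [hGgB]; exact hv0)
  rcases hstep with ⟨k, hwk, hGk⟩ | ⟨d, hdI, j, hdj⟩
  · rcases dig_shape (Sum.inl k) hwk with ⟨i,j,hij,hk,_⟩ | ⟨i,j,hij,hk,_⟩ | ⟨i,j,hij,hk,_⟩ |
        ⟨j,hk,_⟩ | ⟨j,hk,_⟩
    · rw [hk, GgB_inl0] at hGk
      exact finish (chain I hst hl3 hij hGk)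
    · rw [hk, GgB_inl1, if_pos hij] at hGk
      obtain ⟨p, q, hpq, hM⟩ := entry_eP I hst hl3 (ne_of_lt hij) hGk
      exact finish (chain I hst hl3 hpq hM)
    · rw [hk, GgB_inl2, if_pos hij] at hGk
      obtain ⟨p, q, hpq, hM⟩ := entry_fP I hst hl3 (ne_of_lt hij) hGk
      exact finish (chain I hst hl3 hpq hM)
    · exact absurd hk (by simp)
    · exact absurd hk (by simp)
  · obtain ⟨q, hqj, _⟩ := third hl3 j j
    by_cases hcase : d q - d j = 0
    · have hb := hst (eP l j q) (eP_mem_gD _ _) _ hdI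
      rw [lie_eP_diag] at hb
      have hzz : -(d j + d q) ≠ 0 := by
        have h1 : d q = d j := sub_eq_zero.mp hcase
        rw [h1, neg_ne_zero]
        intro hx
        apply hdj
        have h2 : (2 : ℂ) * d j = 0 := by rw [two_mul]; exact hx
        rcases mul_eq_zero.mp h2 with h3 | h3
        · exact absurd h3 (by norm_num)
        · exact h3
      have hePq : eP l j q ∈ I := smul_cancel_mem I hzz hb
      obtain ⟨p, q', hpq, hM⟩ := entry_eP I hst hl3 (Ne.symm hqj) hePq
      exact finish (chain I hst hl3 hpq hM)
    · have hb := hst (eM l j q) (eM_mem_gD _ _) _ hdI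
      rw [lie_eM_diag] at hb
      have heMq : eM l j q ∈ I := smul_cancel_mem I hcase hb
      exact finish (chain I hst hl3 (Ne.symm hqj) heMq)

lemma gB_ideal (hl : 4 ≤ l) (I : Submodule ℂ (CliffordAlgebra (Qform l))) (hle : I ≤ gB l)
    (hst : ∀ u ∈ gB l, ∀ v ∈ I, ⁅u, v⁆ ∈ I) : I = ⊥ ∨ I = gB l := by
  by_cases hbot : I = ⊥
  · exact Or.inl hbot
  right
  have hl3 : 3 ≤ l := by omega
  have hstD : ∀ u ∈ gD l, ∀ v ∈ I, ⁅u, v⁆ ∈ I := fun u hu v hv => hst u (gD_le_gB hu) v hv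
  have finish : ((∀ i j, eM l i j ∈ I) ∧ (∀ i j, eP l i j ∈ I) ∧ (∀ i j, fP l i j ∈ I))
      → I = gB l := by
    intro hch
    refine le_antisymm hle ?_
    rw [gB]
    refine sup_le ?_ ?_
    · rw [gD]
      refine Submodule.span_le.mpr ?_
      rintro z ⟨x, y, rfl⟩
      exact nor_basis_mem I hch.1 hch.2.1 hch.2.2 x y
    · have hiA : ∀ i : Fin l, ι (Qform l) (av l i) ∈ I := by
        intro i
        have hb := hst (ι (Qform l) (av l i)) (iota_mem_gB _) _ (hch.1 i i)
        have heq : ⁅ι (Qform l) (av l i), eM l i i⁆ = -(ι (Qform l) (av l i)) := by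
          rw [← lie_skew, lie_eM_A, del_self, one_smul]
        rw [heq] at hb
        exact (Submodule.neg_mem_iff _).mp hb
      have hiB : ∀ i : Fin l, ι (Qform l) (avs l i) ∈ I := by
        intro i
        have hb := hst (ι (Qform l) (avs l i)) (iota_mem_gB _) _ (hch.1 i i)
        have heq : ⁅ι (Qform l) (avs l i), eM l i i⁆ = ι (Qform l) (avs l i) := by
          rw [← lie_skew, lie_eM_B, del_self, one_smul, neg_neg]
        rw [heq] at hb
        exact hb
      rintro z ⟨x, rfl⟩
      rw [show x = (∑ i, x.1 i • av l i) + ∑ i, x.2 i • avs l i from avec_decomp x]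
      rw [map_add, map_sum, map_sum]
      refine Submodule.add_mem _ (Submodule.sum_mem _ fun i _ => ?_)
        (Submodule.sum_mem _ fun i _ => ?_)
      · rw [map_smul]; exact Submodule.smul_mem _ _ (hiA i)
      · rw [map_smul]; exact Submodule.smul_mem _ _ (hiB i)
  have fromDiag : ∀ j : Fin l, eM l j j ∈ I → I = gB l := by
    intro j hM
    obtain ⟨p, hpj, _⟩ := third hl3 j j
    have hb2 := hstD (eM l p j) (eM_mem_gD _ _) _ hM
    rw [lie_eM_eM, del_self, one_smul, del_ne hpj, zero_smul, sub_zero] at hb2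
    exact finish (chain I hstD hl3 hpj hb2)
  obtain ⟨v, hvI, hv0⟩ := Submodule.exists_mem_ne_zero_of_ne_bot hbot
  have hvB : v ∈ Submodule.span ℂ (Set.range (GgB l)) := by
    rw [← gB_eq_span]; exact hle hvI
  obtain ⟨c, hc⟩ := (Submodule.mem_span_range_iff_exists_fun ℂ).mp hvB
  have hstarI : ∀ x ∈ I, ⁅hstar l, x⁆ ∈ I :=
    fun x hx => hst _ (gD_le_gB hstar_mem_gD) x hx
  have hstep := stepA (id : KB l → KB l) Function.injective_id I hstarI c
    (by rw [show (∑ k : KB l, c k • GgB l (id k)) = v from hc]; exact hvI)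
    (by rw [show (∑ k : KB l, c k • GgB l (id k)) = v from hc]; exact hv0)
  rcases hstep with ⟨k, hwk, hGk⟩ | ⟨d, hdI, j, hdj⟩
  · simp only [id] at hwk hGk
    rcases dig_shape k hwk with ⟨i,j,hij,hk,_⟩ | ⟨i,j,hij,hk,_⟩ | ⟨i,j,hij,hk,_⟩ |
        ⟨j,hk,_⟩ | ⟨j,hk,_⟩
    · rw [hk, GgB_inl0] at hGk
      exact finish (chain I hstD hl3 hij hGk)
    · rw [hk, GgB_inl1, if_pos hij] at hGk
      obtain ⟨p, q, hpq, hM⟩ := entry_eP I hstD hl3 (ne_of_lt hij) hGk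
      exact finish (chain I hstD hl3 hpq hM)
    · rw [hk, GgB_inl2, if_pos hij] at hGk
      obtain ⟨p, q, hpq, hM⟩ := entry_fP I hstD hl3 (ne_of_lt hij) hGk
      exact finish (chain I hstD hl3 hpq hM)
    · rw [hk, GgB_inr0] at hGk
      have hb := hst (ι (Qform l) (avs l j)) (iota_mem_gB _) _ hGk
      rw [lie_B_A] at hb
      exact fromDiag j (smul_cancel_mem I (by norm_num) hb)
    · rw [hk, GgB_inr1] at hGk
      have hb := hst (ι (Qform l) (av l j)) (iota_mem_gB _) _ hGk
      rw [lie_A_B] at hb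
      exact fromDiag j (smul_cancel_mem I (by norm_num) hb)
  · obtain ⟨q, hqj, _⟩ := third hl3 j j
    by_cases hcase : d q - d j = 0
    · have hb := hstD (eP l j q) (eP_mem_gD _ _) _ hdI
      rw [lie_eP_diag] at hb
      have hzz : -(d j + d q) ≠ 0 := by
        have h1 : d q = d j := sub_eq_zero.mp hcase
        rw [h1, neg_ne_zero]
        intro hx
        apply hdj
        have h2 : (2 : ℂ) * d j = 0 := by rw [two_mul]; exact hx
        rcases mul_eq_zero.mp h2 with h3 | h3
        · exact absurd h3 (by norm_num)
        · exact h3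
      have hePq : eP l j q ∈ I := smul_cancel_mem I hzz hb
      obtain ⟨p, q', hpq, hM⟩ := entry_eP I hstD hl3 (Ne.symm hqj) hePq
      exact finish (chain I hstD hl3 hpq hM)
    · have hb := hstD (eM l j q) (eM_mem_gD _ _) _ hdI
      rw [lie_eM_diag] at hb
      have heMq : eM l j q ∈ I := smul_cancel_mem I hcase hb
      exact finish (chain I hstD hl3 (Ne.symm hqj) heMq)

end GDB

/-- The Lie algebras `g_{D_l}` and `g_{B_l}` are simple: each is non-abelian and has no Lie
ideals (bracket-stable subspaces) other than the zero ideal and itself. -/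
theorem gD_gB_simple (l : ℕ) (hl : 4 ≤ l) :
    ((∃ u ∈ gD l, ∃ v ∈ gD l, ⁅u, v⁆ ≠ 0) ∧
      ∀ I : Submodule ℂ (CliffordAlgebra (Qform l)), I ≤ gD l →
        (∀ u ∈ gD l, ∀ v ∈ I, ⁅u, v⁆ ∈ I) → I = ⊥ ∨ I = gD l) ∧
    ((∃ u ∈ gB l, ∃ v ∈ gB l, ⁅u, v⁆ ≠ 0) ∧
      ∀ I : Submodule ℂ (CliffordAlgebra (Qform l)), I ≤ gB l →
        (∀ u ∈ gB l, ∀ v ∈ I, ⁅u, v⁆ ∈ I) → I = ⊥ ∨ I = gB l) := by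
  set i0 : Fin l := ⟨0, by omega⟩ with hi0
  set i1 : Fin l := ⟨1, by omega⟩ with hi1
  have h01 : i0 ≠ i1 := Fin.ne_of_val_ne (by simp [hi0, hi1])
  refine ⟨⟨⟨eM l i0 i1, GDB.eM_mem_gD i0 i1, eM l i1 i0, GDB.eM_mem_gD i1 i0, ?_⟩,
      fun I hle hst => GDB.gD_ideal hl I hle hst⟩,
    ⟨⟨ι (Qform l) (av l i0), GDB.iota_mem_gB _, ι (Qform l) (avs l i0), GDB.iota_mem_gB _, ?_⟩,
      fun I hle hst => GDB.gB_ideal hl I hle hst⟩⟩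
  · rw [GDB.lie_eM_eM, GDB.del_self, GDB.del_self, one_smul, one_smul]
    exact GDB.eM_diag_sub_ne_zero h01
  · rw [GDB.lie_A_B]
    exact GDB.eM_diag_smul_ne_zero 2 (by norm_num) i0

end
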